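/- arXiv:2105.07504 — 2 statements merged into one kernel-verified Lean document; each statement's English description precedes it below -/
import Mathlib

section
/- Suppose a covering map π : M̃ → M is injective on subsets Ω and B of M̃, where Ω is connected, B is closed, and ∂B ⊂ Ω. Then π is injective on B ∪ Ω. -/
open scoped Pointwise
/-- Suppose a covering map `π : M̃ → M` is injective on subsets `Ω` and `B`
of `M̃`, where `Ω` is connected, `B` is closed, and `∂B ⊆ Ω`.  Then `π` is injective on
`B ∪ Ω`.

Here `M̃` is connected (a connected covering of a manifold), the deck transformation
group `G` acts on `M̃` by homeomorphisms, and injectivity of `π` on a set `X` is the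
statement that `g • X` is disjoint from `X` for every non-trivial deck transformation
`g`. -/
theorem injective_on_union_of_injective_on_pieces
    {X G : Type} [TopologicalSpace X] [PreconnectedSpace X]
    [Group G] [MulAction G X]
    (hcont : ∀ g : G, Continuous (fun x : X => g • x))
    (Ω B : Set X)
    (hΩinj : ∀ g : G, g ≠ 1 → Disjoint (g • Ω) Ω)
    (hBinj : ∀ g : G, g ≠ 1 → Disjoint (g • B) B)
    (hΩconn : IsConnected Ω) (hBclosed : IsClosed B)
    (hfr : frontier B ⊆ Ω) :
    ∀ g : G, g ≠ 1 → Disjoint (g • (B ∪ Ω)) (B ∪ Ω) := by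
  -- Key step: for every nontrivial g, g • Ω is disjoint from B.
  have key : ∀ g : G, g ≠ 1 → Disjoint (g • Ω) B := by
    intro g hg
    by_contra h
    rw [Set.not_disjoint_iff] at h
    obtain ⟨x, hxΩ, hxB⟩ := h
    -- s = g • Ω is connected
    have hsconn : IsConnected ((g • ·) '' Ω) :=
      hΩconn.image _ (hcont g).continuousOn
    have himg : (g • ·) '' Ω = g • Ω := Set.image_smul
    rw [himg] at hsconn
    -- g • Ω is disjoint from frontier B
    have hdisfr : Disjoint (g • Ω) (frontier B) :=
      (hΩinj g hg).mono_right hfr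
    -- g • Ω ⊆ interior B ∪ (closure B)ᶜ
    have hsub : g • Ω ⊆ interior B ∪ (closure B)ᶜ := by
      intro y hy
      by_cases hyc : y ∈ closure B
      · left
        by_contra hyi
        exact (hdisfr.ne_of_mem hy ⟨hyc, hyi⟩) rfl
      · right; exact hyc
    -- x ∈ interior B
    have hxint : x ∈ interior B := by
      by_contra hxi
      exact (hdisfr.ne_of_mem hxΩ ⟨subset_closure hxB, hxi⟩) rfl
    -- connectedness forces g • Ω ⊆ interior B
    have hΩsub : g • Ω ⊆ interior B := by
      by_contra hns
      obtain ⟨y, hyΩ, hyi⟩ := Set.not_subset.mp hns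
      have hyc : y ∈ (closure B)ᶜ := (hsub hyΩ).resolve_left hyi
      obtain ⟨z, _, hz1, hz2⟩ := hsconn.isPreconnected (interior B) (closure B)ᶜ isOpen_interior
        (isClosed_closure.isOpen_compl) hsub ⟨x, hxΩ, hxint⟩ ⟨y, hyΩ, hyc⟩
      exact hz2 (subset_closure (interior_subset hz1))
    -- frontier B is nonempty ⟹ contradiction with injectivity on B
    by_cases hfe : frontier B = ∅
    · -- B is clopen, nonempty, hence B = univ; then hBinj fails at x
      have hBclopen : IsClopen B := isClopen_iff_frontier_eq_empty.mpr hfe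
      rcases (isClopen_iff.mp hBclopen) with rfl | rfl
      · exact hxB
      · have hx' : x ∈ g • (Set.univ : Set X) :=
          ⟨g⁻¹ • x, Set.mem_univ _, by simp⟩
        exact (hBinj g hg).ne_of_mem hx' (Set.mem_univ x) rfl
    · obtain ⟨y, hy⟩ := Set.nonempty_iff_ne_empty.mpr hfe
      have hyB : y ∈ B := hBclosed.frontier_subset hy
      have hgyB : g • y ∈ B := interior_subset (hΩsub ⟨y, hfr hy, rfl⟩)
      exact (hBinj g hg).ne_of_mem ⟨y, hyB, rfl⟩ hgyB rfl
  intro g hg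
  rw [Set.smul_set_union, Set.disjoint_union_left]
  constructor <;> rw [Set.disjoint_union_right]
  · refine ⟨hBinj g hg, ?_⟩
    rw [Set.disjoint_right]
    rintro a haΩ ⟨b, hbB, rfl⟩
    have : g⁻¹ • (g • b) ∈ g⁻¹ • Ω := ⟨g • b, haΩ, rfl⟩
    rw [inv_smul_smul] at this
    exact (key g⁻¹ (inv_ne_one.mpr hg)).ne_of_mem this hbB rfl
  · exact ⟨key g hg, hΩinj g hg⟩
end

section
/- Let ρ : M̃ → M̃ be a homeomorphism generating a free ℤ-action, and let (A_i)_{i∈ℤ} with A_i = ρⁱ(A₀) be a family of closed sets such that A_i ⊂ A_j whenever i < j. Then the boundaries ∂A_i and ∂A_j, if they are smooth embedded minimal hypersurfaces in a Riemannian manifold, are either disjoint or, at any point of tangential intersection where they locally lie on one side of each other, coincide on the whole connected component; consequently ⋃_{i∈ℤ} ρⁱ(∂A₀) is an embedded hypersurface. -/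
/-- `Σ₁` lies (locally) on one side of `Σ₂`: `Σ₁` is contained in a closed region whose
frontier contains `Σ₂`. -/
def OneSideOf {X : Type} [TopologicalSpace X] (S₁ S₂ : Set X) : Prop :=
  ∃ W : Set X, IsClosed W ∧ S₁ ⊆ W ∧ S₂ ⊆ frontier W

/-- Let `ρ` generate a free ℤ-action by homeomorphisms (`d i = ρⁱ`) on a
Riemannian manifold `M̃`, and let `A_i = ρⁱ(A₀)` be closed sets with `A_i ⊆ A_j` for
`i < j`, whose boundaries are smooth embedded minimal hypersurfaces.  Then any two of the
boundaries `∂A_i`, `∂A_j` are either disjoint or, at any point of tangential intersection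
(where, by the nesting, they locally lie on one side of each other), their connected
components through that point coincide; consequently `⋃ᵢ ρⁱ(∂A₀)` is an embedded
hypersurface.  The strong maximum principle for minimal hypersurfaces is recorded as the
hypothesis `hMP`. -/
theorem translated_minimal_boundaries_embedded
    {Mt : Type} [TopologicalSpace Mt]
    (d : ℤ → Mt ≃ₜ Mt)                                 -- the ℤ-action i ↦ ρⁱ
    (hd : ∀ i j, d (i + j) = (d i).trans (d j))
    (hfree : ∀ i, i ≠ 0 → ∀ x, d i x ≠ x)
    (A : Set Mt) (hA : IsClosed A)
    (hnest : ∀ i j : ℤ, i < j → (d i) '' A ⊆ (d j) '' A)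
    (Minimal : Set Mt → Prop)        -- "is a smooth embedded minimal hypersurface"
    (hmin : ∀ (i : ℤ), ∀ x ∈ frontier ((d i) '' A),
        Minimal (connectedComponentIn (frontier ((d i) '' A)) x))
    -- strong maximum principle: connected minimal hypersurfaces, one on one side of the
    -- other and touching, coincide
    (hMP : ∀ S₁ S₂ : Set Mt, Minimal S₁ → Minimal S₂ →
        IsPreconnected S₁ → IsPreconnected S₂ →
        OneSideOf S₁ S₂ → (S₁ ∩ S₂).Nonempty → S₁ = S₂) :
    ∀ i j : ℤ, ∀ x, x ∈ frontier ((d i) '' A) → x ∈ frontier ((d j) '' A) →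
      connectedComponentIn (frontier ((d i) '' A)) x
        = connectedComponentIn (frontier ((d j) '' A)) x := by
  -- key step: for i < j, apply the maximum principle
  have key : ∀ i j : ℤ, i < j → ∀ x, x ∈ frontier ((d i) '' A) →
      x ∈ frontier ((d j) '' A) →
      connectedComponentIn (frontier ((d i) '' A)) x
        = connectedComponentIn (frontier ((d j) '' A)) x := by
    intro i j hij x hxi hxj
    have hclosed : IsClosed ((d j) '' A) := (d j).isClosedMap A hA
    apply hMP
    · exact hmin i x hxi
    · exact hmin j x hxj
    · exact isPreconnected_connectedComponentIn
    · exact isPreconnected_connectedComponentIn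
    · refine ⟨(d j) '' A, hclosed, ?_, ?_⟩
      · refine (connectedComponentIn_subset _ _).trans ?_
        refine frontier_subset_closure.trans ?_
        rw [((d i).isClosedMap A hA).closure_eq]
        exact hnest i j hij
      · exact connectedComponentIn_subset _ _
    · exact ⟨x, mem_connectedComponentIn hxi, mem_connectedComponentIn hxj⟩
  intro i j x hxi hxj
  rcases lt_trichotomy i j with h | h | h
  · exact key i j h x hxi hxj
  · rw [h]
  · exact (key j i h x hxj hxi).symm
end
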